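/- Let f : ℂ → ℂ^N be holomorphic and nowhere vanishing, with P₊f nowhere vanishing, and set P₁ = P(P₊f). Then at every point of ℂ, tr(∂P₁ · ∂̄P₁) = |P₊²f|²/|P₊f|² + |P₊f|²/|f|²; i.e. the conformal factor g₊₋ of the metric of the surface built from the first non-holomorphic projector is the sum of the two indicated ratios. -/

import Mathlib

open Complex Matrix

/-- Wirtinger derivative ∂ = (∂/∂ζ₁ − i ∂/∂ζ₂)/2 of a map ℂ → ℂ. -/
noncomputable def wD (f : ℂ → ℂ) (z : ℂ) : ℂ :=
  (fderiv ℝ f z 1 - Complex.I * fderiv ℝ f z Complex.I) / 2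

/-- Anti-Wirtinger derivative ∂̄ = (∂/∂ζ₁ + i ∂/∂ζ₂)/2 of a map ℂ → ℂ. -/
noncomputable def wDbar (f : ℂ → ℂ) (z : ℂ) : ℂ :=
  (fderiv ℝ f z 1 + Complex.I * fderiv ℝ f z Complex.I) / 2

/-- Componentwise Wirtinger derivative for vector-valued maps. -/
noncomputable def wDV {N : ℕ} (f : ℂ → Fin N → ℂ) (z : ℂ) : Fin N → ℂ :=
  fun i => wD (fun w => f w i) z

/-- Componentwise anti-Wirtinger derivative for vector-valued maps. -/
noncomputable def wDbarV {N : ℕ} (f : ℂ → Fin N → ℂ) (z : ℂ) : Fin N → ℂ :=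
  fun i => wDbar (fun w => f w i) z

/-- Hermitian inner product a†·b = Σᵢ āᵢ bᵢ on ℂ^N. -/
noncomputable def herm {N : ℕ} (a b : Fin N → ℂ) : ℂ :=
  ∑ i, (starRingEnd ℂ) (a i) * b i

/-- Squared norm |a|² as a real number. -/
noncomputable def nsq {N : ℕ} (a : Fin N → ℂ) : ℝ :=
  ∑ i, Complex.normSq (a i)

/-- The operator P₊ g = ∂g − g (g†·∂g)/|g|². -/
noncomputable def Pp {N : ℕ} (g : ℂ → Fin N → ℂ) : ℂ → Fin N → ℂ :=
  fun z i => wDV g z i - g z i * (herm (g z) (wDV g z) / herm (g z) (g z))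

/-- Iterates of P₊ : P₊⁰ g = g, P₊^{k+1} g = P₊ (P₊^k g). -/
noncomputable def PpIter {N : ℕ} (g : ℂ → Fin N → ℂ) : ℕ → (ℂ → Fin N → ℂ)
  | 0 => g
  | k + 1 => Pp (PpIter g k)

/-- The projector P(V) = V ⊗ V† / |V|². -/
noncomputable def proj {N : ℕ} (V : ℂ → Fin N → ℂ) (z : ℂ) : Matrix (Fin N) (Fin N) ℂ :=
  fun i j => V z i * (starRingEnd ℂ) (V z j) / herm (V z) (V z)

/-- Entrywise Wirtinger derivative for matrix-valued maps. -/
noncomputable def wDM {N : ℕ} (M : ℂ → Matrix (Fin N) (Fin N) ℂ) (z : ℂ) :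
    Matrix (Fin N) (Fin N) ℂ :=
  fun i j => wD (fun w => M w i j) z

/-- Entrywise anti-Wirtinger derivative for matrix-valued maps. -/
noncomputable def wDbarM {N : ℕ} (M : ℂ → Matrix (Fin N) (Fin N) ℂ) (z : ℂ) :
    Matrix (Fin N) (Fin N) ℂ :=
  fun i j => wDbar (fun w => M w i j) z
section lemmas
variable {g h : ℂ → ℂ} {z : ℂ}

lemma wD_add (hg : DifferentiableAt ℝ g z) (hh : DifferentiableAt ℝ h z) :
    wD (fun w => g w + h w) z = wD g z + wD h z := by
  unfold wD; rw [fderiv_fun_add hg hh]; simp; ring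

lemma wDbar_add (hg : DifferentiableAt ℝ g z) (hh : DifferentiableAt ℝ h z) :
    wDbar (fun w => g w + h w) z = wDbar g z + wDbar h z := by
  unfold wDbar; rw [fderiv_fun_add hg hh]; simp; ring

lemma wD_sub (hg : DifferentiableAt ℝ g z) (hh : DifferentiableAt ℝ h z) :
    wD (fun w => g w - h w) z = wD g z - wD h z := by
  unfold wD; rw [fderiv_fun_sub hg hh]; simp; ring

lemma wDbar_sub (hg : DifferentiableAt ℝ g z) (hh : DifferentiableAt ℝ h z) :
    wDbar (fun w => g w - h w) z = wDbar g z - wDbar h z := by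
  unfold wDbar; rw [fderiv_fun_sub hg hh]; simp; ring

lemma wD_mul (hg : DifferentiableAt ℝ g z) (hh : DifferentiableAt ℝ h z) :
    wD (fun w => g w * h w) z = wD g z * h z + g z * wD h z := by
  unfold wD; rw [fderiv_fun_mul hg hh]; simp [smul_eq_mul]; ring

lemma wDbar_mul (hg : DifferentiableAt ℝ g z) (hh : DifferentiableAt ℝ h z) :
    wDbar (fun w => g w * h w) z = wDbar g z * h z + g z * wDbar h z := by
  unfold wDbar; rw [fderiv_fun_mul hg hh]; simp [smul_eq_mul]; ring

lemma wD_conj (hg : DifferentiableAt ℝ g z) :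
    wD (fun w => (starRingEnd ℂ) (g w)) z = (starRingEnd ℂ) (wDbar g z) := by
  unfold wD wDbar
  have : (fun w => (starRingEnd ℂ) (g w)) = (Complex.conjCLE : ℂ →L[ℝ] ℂ) ∘ g := rfl
  rw [this, fderiv_comp z (ContinuousLinearMap.differentiableAt _) hg,
    ContinuousLinearMap.fderiv]
  simp [Complex.conjCLE]
  rw [show (starRingEnd ℂ) 2 = 2 from map_ofNat _ 2]
  ring

lemma wDbar_conj (hg : DifferentiableAt ℝ g z) :
    wDbar (fun w => (starRingEnd ℂ) (g w)) z = (starRingEnd ℂ) (wD g z) := by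
  unfold wD wDbar
  have : (fun w => (starRingEnd ℂ) (g w)) = (Complex.conjCLE : ℂ →L[ℝ] ℂ) ∘ g := rfl
  rw [this, fderiv_comp z (ContinuousLinearMap.differentiableAt _) hg,
    ContinuousLinearMap.fderiv]
  simp [Complex.conjCLE]
  rw [show (starRingEnd ℂ) 2 = 2 from map_ofNat _ 2]

lemma wD_id : wD (fun w => w) z = 1 := by
  unfold wD
  rw [show (fun w : ℂ => w) = id from rfl, fderiv_id]
  simp [Complex.ext_iff]

lemma wDbar_id : wDbar (fun w => w) z = 0 := by
  unfold wDbar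
  rw [show (fun w : ℂ => w) = id from rfl, fderiv_id]
  simp [Complex.ext_iff]

/-- chain rule with holomorphic outer function -/
lemma wD_comp_hol {φ : ℂ → ℂ} (hφ : DifferentiableAt ℂ φ (g z))
    (hg : DifferentiableAt ℝ g z) :
    wD (fun w => φ (g w)) z = deriv φ (g z) * wD g z := by
  unfold wD
  have h1 : (fun w => φ (g w)) = φ ∘ g := rfl
  rw [h1, fderiv_comp z (hφ.restrictScalars ℝ) hg, hφ.fderiv_restrictScalars ℝ]
  have happ : ∀ v : ℂ, fderiv ℂ φ (g z) v = v * deriv φ (g z) := by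
    intro v
    have := (fderiv ℂ φ (g z)).map_smul v (1 : ℂ)
    simpa [smul_eq_mul, fderiv_apply_one_eq_deriv] using this
  simp [ContinuousLinearMap.comp_apply, ContinuousLinearMap.coe_restrictScalars', happ]
  ring

lemma wDbar_comp_hol {φ : ℂ → ℂ} (hφ : DifferentiableAt ℂ φ (g z))
    (hg : DifferentiableAt ℝ g z) :
    wDbar (fun w => φ (g w)) z = deriv φ (g z) * wDbar g z := by
  unfold wDbar
  have h1 : (fun w => φ (g w)) = φ ∘ g := rfl
  rw [h1, fderiv_comp z (hφ.restrictScalars ℝ) hg, hφ.fderiv_restrictScalars ℝ]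
  have happ : ∀ v : ℂ, fderiv ℂ φ (g z) v = v * deriv φ (g z) := by
    intro v
    have := (fderiv ℂ φ (g z)).map_smul v (1 : ℂ)
    simpa [smul_eq_mul, fderiv_apply_one_eq_deriv] using this
  simp [ContinuousLinearMap.comp_apply, ContinuousLinearMap.coe_restrictScalars', happ]
  ring

lemma wD_of_hol (hg : DifferentiableAt ℂ g z) : wD g z = deriv g z := by
  have h := wD_comp_hol (g := fun w => w) (φ := g) (z := z) hg differentiableAt_fun_id
  rw [wD_id] at h
  simpa using h

lemma wDbar_of_hol (hg : DifferentiableAt ℂ g z) : wDbar g z = 0 := by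
  have h := wDbar_comp_hol (g := fun w => w) (φ := g) (z := z) hg differentiableAt_fun_id
  rw [wDbar_id] at h
  simpa using h

lemma wD_inv (hg : DifferentiableAt ℝ g z) (h0 : g z ≠ 0) :
    wD (fun w => (g w)⁻¹) z = -(wD g z) / g z ^ 2 := by
  rw [wD_comp_hol (φ := fun x => x⁻¹) (differentiableAt_inv h0) hg, deriv_inv]
  field_simp

lemma wDbar_inv (hg : DifferentiableAt ℝ g z) (h0 : g z ≠ 0) :
    wDbar (fun w => (g w)⁻¹) z = -(wDbar g z) / g z ^ 2 := by
  rw [wDbar_comp_hol (φ := fun x => x⁻¹) (differentiableAt_inv h0) hg, deriv_inv]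
  field_simp

lemma wD_div (hg : DifferentiableAt ℝ g z) (hh : DifferentiableAt ℝ h z) (h0 : h z ≠ 0) :
    wD (fun w => g w / h w) z = (wD g z * h z - g z * wD h z) / h z ^ 2 := by
  have : (fun w => g w / h w) = fun w => g w * (h w)⁻¹ := by
    funext w; rw [div_eq_mul_inv]
  rw [this, wD_mul hg (hh.fun_inv h0), wD_inv hh h0]
  field_simp; ring

lemma wDbar_div (hg : DifferentiableAt ℝ g z) (hh : DifferentiableAt ℝ h z) (h0 : h z ≠ 0) :
    wDbar (fun w => g w / h w) z = (wDbar g z * h z - g z * wDbar h z) / h z ^ 2 := by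
  have : (fun w => g w / h w) = fun w => g w * (h w)⁻¹ := by
    funext w; rw [div_eq_mul_inv]
  rw [this, wDbar_mul hg (hh.fun_inv h0), wDbar_inv hh h0]
  field_simp; ring

lemma wD_sum {ι : Type*} (s : Finset ι) (g : ι → ℂ → ℂ)
    (hg : ∀ i ∈ s, DifferentiableAt ℝ (g i) z) :
    wD (fun w => ∑ i ∈ s, g i w) z = ∑ i ∈ s, wD (g i) z := by
  unfold wD
  rw [fderiv_fun_sum hg]
  simp only [ContinuousLinearMap.sum_apply]
  rw [Finset.mul_sum, ← Finset.sum_sub_distrib, ← Finset.sum_div]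

lemma wDbar_sum {ι : Type*} (s : Finset ι) (g : ι → ℂ → ℂ)
    (hg : ∀ i ∈ s, DifferentiableAt ℝ (g i) z) :
    wDbar (fun w => ∑ i ∈ s, g i w) z = ∑ i ∈ s, wDbar (g i) z := by
  unfold wDbar
  rw [fderiv_fun_sum hg]
  simp only [ContinuousLinearMap.sum_apply]
  rw [Finset.mul_sum, ← Finset.sum_add_distrib, ← Finset.sum_div]

end lemmas
section alg
variable {N : ℕ}

lemma herm_self_real (a : Fin N → ℂ) : herm a a = ((nsq a : ℝ) : ℂ) := by
  unfold herm nsq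
  push_cast
  refine Finset.sum_congr rfl fun i _ => ?_
  rw [Complex.normSq_eq_conj_mul_self]

lemma conj_herm (a b : Fin N → ℂ) : (starRingEnd ℂ) (herm a b) = herm b a := by
  unfold herm
  rw [map_sum]
  refine Finset.sum_congr rfl fun i _ => ?_
  simp [_root_.map_mul, mul_comm]

lemma conj_herm_self (a : Fin N → ℂ) : (starRingEnd ℂ) (herm a a) = herm a a :=
  conj_herm a a

lemma nsq_ne_zero {a : Fin N → ℂ} (h : a ≠ 0) : nsq a ≠ 0 := by
  unfold nsq
  have : ∃ i, a i ≠ 0 := by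
    by_contra hc
    push_neg at hc
    exact h (funext hc)
  obtain ⟨i, hi⟩ := this
  have hpos : 0 < ∑ j, Complex.normSq (a j) :=
    Finset.sum_pos' (fun j _ => Complex.normSq_nonneg _)
      ⟨i, Finset.mem_univ i, Complex.normSq_pos.2 hi⟩
  exact ne_of_gt hpos

lemma herm_self_ne_zero {a : Fin N → ℂ} (h : a ≠ 0) : herm a a ≠ 0 := by
  rw [herm_self_real]
  exact_mod_cast nsq_ne_zero h

lemma herm_sub_smul (a b : Fin N → ℂ) (c : ℂ) :
    herm a (fun i => b i - a i * c) = herm a b - herm a a * c := by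
  unfold herm
  simp only [mul_sub, ← mul_assoc]
  rw [Finset.sum_sub_distrib, ← Finset.sum_mul]

/-- Orthogonality g ⟂ P₊g : purely algebraic. -/
lemma herm_Pp_orth (g : ℂ → Fin N → ℂ) (z : ℂ) (h0 : herm (g z) (g z) ≠ 0) :
    herm (g z) (Pp g z) = 0 := by
  rw [show Pp g z = (fun i => wDV g z i
      - g z i * (herm (g z) (wDV g z) / herm (g z) (g z))) from rfl,
    herm_sub_smul]
  field_simp
  ring

lemma herm_Pp_orth' (g : ℂ → Fin N → ℂ) (z : ℂ) (h0 : herm (g z) (g z) ≠ 0) :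
    herm (Pp g z) (g z) = 0 := by
  rw [← conj_herm, herm_Pp_orth g z h0, map_zero]

end alg

section level2
variable {N : ℕ}

/-- derivative of an entire function is entire -/
lemma deriv_entire {g : ℂ → ℂ} (hg : Differentiable ℂ g) : Differentiable ℂ (deriv g) := by
  have h2 : ContDiff ℂ ((1 : WithTop ℕ∞) + 1) g := hg.contDiff
  exact ((contDiff_succ_iff_deriv.mp h2).2.2).differentiable one_ne_zero

lemma diff_conj {g : ℂ → ℂ} {z : ℂ} (hg : DifferentiableAt ℝ g z) :
    DifferentiableAt ℝ (fun w => (starRingEnd ℂ) (g w)) z := by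
  simpa [Complex.star_def] using hg.star

noncomputable def fd {N : ℕ} (f : ℂ → Fin N → ℂ) : ℂ → Fin N → ℂ :=
  fun w i => deriv (fun x => f x i) w

variable {f : ℂ → Fin N → ℂ}

lemma fd_hol (hf : ∀ i, Differentiable ℂ fun z => f z i) (i : Fin N) :
    Differentiable ℂ (fun w => fd f w i) := deriv_entire (hf i)

lemma wDV_eq_fd (hf : ∀ i, Differentiable ℂ fun z => f z i) (w : ℂ) :
    wDV f w = fd f w := by
  funext i
  exact wD_of_hol ((hf i) w)

lemma Pp_eq (hf : ∀ i, Differentiable ℂ fun z => f z i) (w : ℂ) :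
    Pp f w = fun i => fd f w i - f w i * (herm (f w) (fd f w) / herm (f w) (f w)) := by
  funext i
  simp only [Pp, wDV_eq_fd hf w]

lemma Pp_fun_eq (hf : ∀ i, Differentiable ℂ fun z => f z i) (i : Fin N) :
    (fun w => Pp f w i)
      = fun w => fd f w i - f w i * (herm (f w) (fd f w) / herm (f w) (f w)) := by
  funext w
  rw [Pp_eq hf w]

lemma diff_herm {u v : ℂ → Fin N → ℂ} {z : ℂ}
    (hu : ∀ i, DifferentiableAt ℝ (fun w => u w i) z)
    (hv : ∀ i, DifferentiableAt ℝ (fun w => v w i) z) :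
    DifferentiableAt ℝ (fun w => herm (u w) (v w)) z := by
  simp only [herm]
  exact DifferentiableAt.fun_sum fun i _ => (diff_conj (hu i)).mul (hv i)

lemma f_diffR (hf : ∀ i, Differentiable ℂ fun z => f z i) (i : Fin N) :
    Differentiable ℝ (fun w => f w i) := (hf i).restrictScalars ℝ

lemma Pp_diffR (hf : ∀ i, Differentiable ℂ fun z => f z i) (hf0 : ∀ z, f z ≠ 0)
    (i : Fin N) : Differentiable ℝ (fun w => Pp f w i) := by
  rw [Pp_fun_eq hf i]
  intro z
  have h1 : ∀ j, DifferentiableAt ℝ (fun w => f w j) z := fun j => f_diffR hf j z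
  have h2 : ∀ j, DifferentiableAt ℝ (fun w => fd f w j) z :=
    fun j => ((fd_hol hf j).restrictScalars ℝ) z
  have hq : DifferentiableAt ℝ
      (fun w => herm (f w) (fd f w) / herm (f w) (f w)) z :=
    by simp only [div_eq_mul_inv]
       exact (diff_herm h1 h2).mul ((diff_herm h1 h1).inv (herm_self_ne_zero (hf0 z)))
  exact (((fd_hol hf i).restrictScalars ℝ) z).sub ((h1 i).mul hq)

lemma wD_A (hf : ∀ i, Differentiable ℂ fun z => f z i) (z : ℂ) :
    wD (fun w => herm (f w) (f w)) z = herm (f z) (fd f z) := by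
  simp only [herm]
  rw [wD_sum _ _ (fun i _ => (diff_conj (f_diffR hf i z)).fun_mul (f_diffR hf i z))]
  refine Finset.sum_congr rfl fun i _ => ?_
  rw [wD_mul (diff_conj (f_diffR hf i z)) (f_diffR hf i z),
    wD_conj (f_diffR hf i z), wDbar_of_hol ((hf i) z), wD_of_hol ((hf i) z)]
  simp [fd]

lemma wDbar_A (hf : ∀ i, Differentiable ℂ fun z => f z i) (z : ℂ) :
    wDbar (fun w => herm (f w) (f w)) z = herm (fd f z) (f z) := by
  simp only [herm]
  rw [wDbar_sum _ _ (fun i _ => (diff_conj (f_diffR hf i z)).fun_mul (f_diffR hf i z))]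
  refine Finset.sum_congr rfl fun i _ => ?_
  rw [wDbar_mul (diff_conj (f_diffR hf i z)) (f_diffR hf i z),
    wDbar_conj (f_diffR hf i z), wDbar_of_hol ((hf i) z), wD_of_hol ((hf i) z)]
  simp [fd]

lemma wDbar_B (hf : ∀ i, Differentiable ℂ fun z => f z i) (z : ℂ) :
    wDbar (fun w => herm (f w) (fd f w)) z = herm (fd f z) (fd f z) := by
  simp only [herm]
  rw [wDbar_sum _ _ (fun i _ =>
    (diff_conj (f_diffR hf i z)).fun_mul (((fd_hol hf i).restrictScalars ℝ) z))]
  refine Finset.sum_congr rfl fun i _ => ?_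
  rw [wDbar_mul (diff_conj (f_diffR hf i z)) (((fd_hol hf i).restrictScalars ℝ) z),
    wDbar_conj (f_diffR hf i z), wDbar_of_hol ((fd_hol hf i) z), wD_of_hol ((hf i) z)]
  simp [fd]

lemma herm_sub_left (a b c : Fin N → ℂ) (q : ℂ) :
    herm (fun i => a i - b i * q) c = herm a c - (starRingEnd ℂ) q * herm b c := by
  unfold herm
  rw [Finset.mul_sum, ← Finset.sum_sub_distrib]
  refine Finset.sum_congr rfl fun i _ => ?_
  simp only [map_sub, _root_.map_mul]
  ring

lemma herm_sub_right (a b c : Fin N → ℂ) (q : ℂ) :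
    herm c (fun i => a i - b i * q) = herm c a - herm c b * q := by
  unfold herm
  rw [Finset.sum_mul, ← Finset.sum_sub_distrib]
  refine Finset.sum_congr rfl fun i _ => ?_
  ring

/-- |P₊f|² = |f'|² − |⟨f,f'⟩|²/|f|² -/
lemma herm_Pp_self (hf : ∀ i, Differentiable ℂ fun z => f z i) (hf0 : ∀ z, f z ≠ 0)
    (z : ℂ) :
    herm (Pp f z) (Pp f z) * herm (f z) (f z)
      = herm (fd f z) (fd f z) * herm (f z) (f z)
        - herm (f z) (fd f z) * (starRingEnd ℂ) (herm (f z) (fd f z)) := by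
  have hA0 : herm (f z) (f z) ≠ 0 := herm_self_ne_zero (hf0 z)
  have hcA : (starRingEnd ℂ) (herm (f z) (f z)) = herm (f z) (f z) := conj_herm_self _
  rw [Pp_eq hf z, herm_sub_left, herm_sub_right, herm_sub_right,
    map_div₀, hcA, conj_herm]
  field_simp
  ring

/-- ∂̄(P₊f) = −f |P₊f|²/|f|² -/
lemma wDbar_Pp (hf : ∀ i, Differentiable ℂ fun z => f z i) (hf0 : ∀ z, f z ≠ 0)
    (z : ℂ) (i : Fin N) :
    wDbar (fun w => Pp f w i) z
      = -(f z i) * (herm (Pp f z) (Pp f z) / herm (f z) (f z)) := by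
  have hA0 : herm (f z) (f z) ≠ 0 := herm_self_ne_zero (hf0 z)
  have h1 : ∀ j, DifferentiableAt ℝ (fun w => f w j) z := fun j => f_diffR hf j z
  have h2 : ∀ j, DifferentiableAt ℝ (fun w => fd f w j) z :=
    fun j => ((fd_hol hf j).restrictScalars ℝ) z
  have hq : DifferentiableAt ℝ
      (fun w => herm (f w) (fd f w) / herm (f w) (f w)) z :=
    by simp only [div_eq_mul_inv]
       exact (diff_herm h1 h2).mul ((diff_herm h1 h1).inv hA0)
  rw [Pp_fun_eq hf i,
    wDbar_sub (h2 i) ((h1 i).fun_mul hq),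
    wDbar_of_hol ((fd_hol hf i) z),
    wDbar_mul (h1 i) hq,
    wDbar_of_hol ((hf i) z),
    wDbar_div (diff_herm h1 h2) (diff_herm h1 h1) hA0,
    wDbar_B hf z, wDbar_A hf z]
  have key := herm_Pp_self hf hf0 z
  have hconjB : herm (fd f z) (f z) = (starRingEnd ℂ) (herm (f z) (fd f z)) :=
    (conj_herm _ _).symm
  rw [hconjB]
  field_simp
  linear_combination (f z i) * key

end level2

/-- For `P₁ = P(P₊f)`,
`tr(∂P₁ · ∂̄P₁) = |P₊²f|²/|P₊f|² + |P₊f|²/|f|²`. -/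
theorem stmt_5 {N : ℕ} (f : ℂ → Fin N → ℂ)
    (hf : ∀ i, Differentiable ℂ fun z => f z i)
    (hf0 : ∀ z, f z ≠ 0) (hPf0 : ∀ z, Pp f z ≠ 0) :
    ∀ ζ : ℂ,
      Matrix.trace (wDM (proj (Pp f)) ζ * wDbarM (proj (Pp f)) ζ) =
        ((nsq (Pp (Pp f) ζ) / nsq (Pp f ζ) + nsq (Pp f ζ) / nsq (f ζ) : ℝ) : ℂ) := by
  intro z
  have hA0 : herm (f z) (f z) ≠ 0 := herm_self_ne_zero (hf0 z)
  have hA1 : herm (Pp f z) (Pp f z) ≠ 0 := herm_self_ne_zero (hPf0 z)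
  have hcA : (starRingEnd ℂ) (herm (f z) (f z)) = herm (f z) (f z) := conj_herm_self _
  have hcA1 : (starRingEnd ℂ) (herm (Pp f z) (Pp f z)) = herm (Pp f z) (Pp f z) :=
    conj_herm_self _
  have horth : herm (f z) (Pp f z) = 0 := herm_Pp_orth f z hA0
  have horth' : herm (Pp f z) (f z) = 0 := herm_Pp_orth' f z hA0
  have hu : ∀ i, Differentiable ℝ (fun w => Pp f w i) := Pp_diffR hf hf0
  have hubar : ∀ i, wDbar (fun w => Pp f w i) z
      = -(f z i) * (herm (Pp f z) (Pp f z) / herm (f z) (f z)) :=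
    fun i => wDbar_Pp hf hf0 z i
  set D : ℂ := herm (Pp f z) (wDV (Pp f) z) / herm (Pp f z) (Pp f z) with hD
  have hvD : ∀ i, wD (fun w => Pp f w i) z = Pp (Pp f) z i + Pp f z i * D := by
    intro i
    have h0 : Pp (Pp f) z i = wD (fun w => Pp f w i) z - Pp f z i * D := by
      rw [hD]; rfl
    rw [h0]; ring
  have hermD : (∑ k, (starRingEnd ℂ) (Pp f z k) * wD (fun w => Pp f w k) z)
      = D * herm (Pp f z) (Pp f z) := by
    have h0 : (∑ k, (starRingEnd ℂ) (Pp f z k) * wD (fun w => Pp f w k) z)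
        = herm (Pp f z) (wDV (Pp f) z) := rfl
    rw [h0, hD]; field_simp
  have hA1diff : Differentiable ℝ (fun w => herm (Pp f w) (Pp f w)) := by
    intro w
    exact diff_herm (fun i => hu i w) (fun i => hu i w)
  -- ∂ of |P₊f|²
  have hwDA1 : wD (fun w => herm (Pp f w) (Pp f w)) z
      = D * herm (Pp f z) (Pp f z) := by
    show wD (fun w => ∑ k, (starRingEnd ℂ) (Pp f w k) * Pp f w k) z = _
    rw [wD_sum _ _ (fun k _ => (diff_conj (hu k z)).fun_mul (hu k z))]
    have step : ∀ k, wD (fun w => (starRingEnd ℂ) (Pp f w k) * Pp f w k) z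
        = (starRingEnd ℂ) (wDbar (fun w => Pp f w k) z) * Pp f z k
          + (starRingEnd ℂ) (Pp f z k) * wD (fun w => Pp f w k) z := fun k => by
      rw [wD_mul (diff_conj (hu k z)) (hu k z), wD_conj (hu k z)]
    calc (∑ k, wD (fun w => (starRingEnd ℂ) (Pp f w k) * Pp f w k) z)
        = ∑ k, ((starRingEnd ℂ) (wDbar (fun w => Pp f w k) z) * Pp f z k
            + (starRingEnd ℂ) (Pp f z k) * wD (fun w => Pp f w k) z) :=
          Finset.sum_congr rfl fun k _ => step k
      _ = (∑ k, (starRingEnd ℂ) (wDbar (fun w => Pp f w k) z) * Pp f z k)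
          + (∑ k, (starRingEnd ℂ) (Pp f z k) * wD (fun w => Pp f w k) z) :=
          Finset.sum_add_distrib
      _ = 0 + D * herm (Pp f z) (Pp f z) := by
          rw [hermD]
          congr 1
          have e : ∀ k, (starRingEnd ℂ) (wDbar (fun w => Pp f w k) z) * Pp f z k
              = ((starRingEnd ℂ) (f z k) * Pp f z k)
                * (-(herm (Pp f z) (Pp f z) / herm (f z) (f z))) := fun k => by
            rw [hubar k, _root_.map_mul, map_neg, map_div₀, hcA, hcA1]; ring
          rw [Finset.sum_congr rfl fun k _ => e k, ← Finset.sum_mul,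
            show (∑ k, (starRingEnd ℂ) (f z k) * Pp f z k) = herm (f z) (Pp f z)
              from rfl,
            horth, zero_mul]
      _ = D * herm (Pp f z) (Pp f z) := zero_add _
  -- ∂̄ of |P₊f|²
  have hwDbarA1 : wDbar (fun w => herm (Pp f w) (Pp f w)) z
      = (starRingEnd ℂ) D * herm (Pp f z) (Pp f z) := by
    show wDbar (fun w => ∑ k, (starRingEnd ℂ) (Pp f w k) * Pp f w k) z = _
    rw [wDbar_sum _ _ (fun k _ => (diff_conj (hu k z)).fun_mul (hu k z))]
    have step : ∀ k, wDbar (fun w => (starRingEnd ℂ) (Pp f w k) * Pp f w k) z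
        = (starRingEnd ℂ) (wD (fun w => Pp f w k) z) * Pp f z k
          + (starRingEnd ℂ) (Pp f z k) * wDbar (fun w => Pp f w k) z := fun k => by
      rw [wDbar_mul (diff_conj (hu k z)) (hu k z), wDbar_conj (hu k z)]
    calc (∑ k, wDbar (fun w => (starRingEnd ℂ) (Pp f w k) * Pp f w k) z)
        = ∑ k, ((starRingEnd ℂ) (wD (fun w => Pp f w k) z) * Pp f z k
            + (starRingEnd ℂ) (Pp f z k) * wDbar (fun w => Pp f w k) z) :=
          Finset.sum_congr rfl fun k _ => step k
      _ = (∑ k, (starRingEnd ℂ) (wD (fun w => Pp f w k) z) * Pp f z k)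
          + (∑ k, (starRingEnd ℂ) (Pp f z k) * wDbar (fun w => Pp f w k) z) :=
          Finset.sum_add_distrib
      _ = (starRingEnd ℂ) D * herm (Pp f z) (Pp f z) + 0 := by
          congr 1
          · have e : (∑ k, (starRingEnd ℂ) (wD (fun w => Pp f w k) z) * Pp f z k)
                = (starRingEnd ℂ)
                  (∑ k, (starRingEnd ℂ) (Pp f z k) * wD (fun w => Pp f w k) z) := by
              rw [map_sum]
              refine Finset.sum_congr rfl fun k _ => ?_
              rw [_root_.map_mul, Complex.conj_conj]
              ring
            rw [e, hermD, _root_.map_mul, hcA1]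
          · have e : ∀ k, (starRingEnd ℂ) (Pp f z k) * wDbar (fun w => Pp f w k) z
                = ((starRingEnd ℂ) (Pp f z k) * f z k)
                  * (-(herm (Pp f z) (Pp f z) / herm (f z) (f z))) := fun k => by
              rw [hubar k]; ring
            rw [Finset.sum_congr rfl fun k _ => e k, ← Finset.sum_mul,
              show (∑ k, (starRingEnd ℂ) (Pp f z k) * f z k) = herm (Pp f z) (f z)
                from rfl,
              horth', zero_mul]
      _ = (starRingEnd ℂ) D * herm (Pp f z) (Pp f z) := add_zero _
  have hconjq : (starRingEnd ℂ) (herm (Pp f z) (Pp f z) / herm (f z) (f z))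
      = herm (Pp f z) (Pp f z) / herm (f z) (f z) := by
    rw [map_div₀, hcA, hcA1]
  -- entries of ∂P₁
  have hWD : ∀ i j, wDM (proj (Pp f)) z i j
      = Pp (Pp f) z i * (starRingEnd ℂ) (Pp f z j) / herm (Pp f z) (Pp f z)
        - Pp f z i * (starRingEnd ℂ) (f z j) / herm (f z) (f z) := by
    intro i j
    have hnum : DifferentiableAt ℝ
        (fun w => Pp f w i * (starRingEnd ℂ) (Pp f w j)) z :=
      (hu i z).mul (diff_conj (hu j z))
    show wD (fun w =>
      Pp f w i * (starRingEnd ℂ) (Pp f w j) / herm (Pp f w) (Pp f w)) z = _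
    rw [wD_div hnum (hA1diff z) hA1,
      wD_mul (hu i z) (diff_conj (hu j z)), wD_conj (hu j z),
      hubar j, hvD i, hwDA1, _root_.map_mul, map_neg, hconjq]
    field_simp
    ring
  -- entries of ∂̄P₁
  have hWDbar : ∀ i j, wDbarM (proj (Pp f)) z i j
      = -(f z i) * (starRingEnd ℂ) (Pp f z j) / herm (f z) (f z)
        + Pp f z i * (starRingEnd ℂ) (Pp (Pp f) z j) / herm (Pp f z) (Pp f z) := by
    intro i j
    have hnum : DifferentiableAt ℝ
        (fun w => Pp f w i * (starRingEnd ℂ) (Pp f w j)) z :=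
      (hu i z).mul (diff_conj (hu j z))
    show wDbar (fun w =>
      Pp f w i * (starRingEnd ℂ) (Pp f w j) / herm (Pp f w) (Pp f w)) z = _
    rw [wDbar_div hnum (hA1diff z) hA1,
      wDbar_mul (hu i z) (diff_conj (hu j z)), wDbar_conj (hu j z),
      hubar i, hvD j, hwDbarA1, map_add, _root_.map_mul]
    field_simp
    ring
  -- assemble the trace
  have htr : Matrix.trace (wDM (proj (Pp f)) z * wDbarM (proj (Pp f)) z)
      = ∑ i, ∑ j, wDM (proj (Pp f)) z i j * wDbarM (proj (Pp f)) z j i := by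
    simp [Matrix.trace, Matrix.mul_apply, Matrix.diag]
  rw [htr]
  have step1 : ∀ i j : Fin N,
      wDM (proj (Pp f)) z i j * wDbarM (proj (Pp f)) z j i
        = (Pp (Pp f) z i * (starRingEnd ℂ) (Pp (Pp f) z i)
            / (herm (Pp f z) (Pp f z) * herm (Pp f z) (Pp f z)))
            * ((starRingEnd ℂ) (Pp f z j) * Pp f z j)
          + (-(Pp (Pp f) z i * (starRingEnd ℂ) (Pp f z i))
            / (herm (Pp f z) (Pp f z) * herm (f z) (f z)))
            * ((starRingEnd ℂ) (Pp f z j) * f z j)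
          + (-(Pp f z i * (starRingEnd ℂ) (Pp (Pp f) z i))
            / (herm (f z) (f z) * herm (Pp f z) (Pp f z)))
            * ((starRingEnd ℂ) (f z j) * Pp f z j)
          + (Pp f z i * (starRingEnd ℂ) (Pp f z i)
            / (herm (f z) (f z) * herm (f z) (f z)))
            * ((starRingEnd ℂ) (f z j) * f z j) := by
    intro i j
    rw [hWD i j, hWDbar j i]
    ring
  calc (∑ i, ∑ j, wDM (proj (Pp f)) z i j * wDbarM (proj (Pp f)) z j i)
      = ∑ i : Fin N,
        ((Pp (Pp f) z i * (starRingEnd ℂ) (Pp (Pp f) z i)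
            / (herm (Pp f z) (Pp f z) * herm (Pp f z) (Pp f z)))
            * herm (Pp f z) (Pp f z)
          + (-(Pp (Pp f) z i * (starRingEnd ℂ) (Pp f z i))
            / (herm (Pp f z) (Pp f z) * herm (f z) (f z)))
            * herm (Pp f z) (f z)
          + (-(Pp f z i * (starRingEnd ℂ) (Pp (Pp f) z i))
            / (herm (f z) (f z) * herm (Pp f z) (Pp f z)))
            * herm (f z) (Pp f z)
          + (Pp f z i * (starRingEnd ℂ) (Pp f z i)
            / (herm (f z) (f z) * herm (f z) (f z)))
            * herm (f z) (f z)) := by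
        refine Finset.sum_congr rfl fun i _ => ?_
        rw [Finset.sum_congr rfl fun j _ => step1 i j,
          Finset.sum_add_distrib, Finset.sum_add_distrib, Finset.sum_add_distrib,
          ← Finset.mul_sum, ← Finset.mul_sum, ← Finset.mul_sum, ← Finset.mul_sum]
        rfl
    _ = ∑ i : Fin N,
        ((starRingEnd ℂ) (Pp (Pp f) z i) * Pp (Pp f) z i / herm (Pp f z) (Pp f z)
          + (starRingEnd ℂ) (Pp f z i) * Pp f z i / herm (f z) (f z)) := by
        refine Finset.sum_congr rfl fun i _ => ?_
        rw [horth, horth']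
        field_simp
        ring
    _ = (∑ i, (starRingEnd ℂ) (Pp (Pp f) z i) * Pp (Pp f) z i)
          / herm (Pp f z) (Pp f z)
        + (∑ i, (starRingEnd ℂ) (Pp f z i) * Pp f z i) / herm (f z) (f z) := by
        rw [Finset.sum_add_distrib, Finset.sum_div, Finset.sum_div]
    _ = herm (Pp (Pp f) z) (Pp (Pp f) z) / herm (Pp f z) (Pp f z)
        + herm (Pp f z) (Pp f z) / herm (f z) (f z) := rfl
    _ = ((nsq (Pp (Pp f) z) / nsq (Pp f z) + nsq (Pp f z) / nsq (f z) : ℝ) : ℂ) := by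
        rw [herm_self_real (Pp (Pp f) z), herm_self_real (Pp f z),
          herm_self_real (f z)]
        push_cast
        ring
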